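/- (Theorem 3, part 3) Let {ρ_{ik} = U_iφ_kφ_k*U_i*, 1 ≤ i ≤ l, 1 ≤ k ≤ r} be a compound geometrically uniform state set of density matrices with uniform priors 1/(lr), and assume W = Σ_{i,k} U_iφ_kφ_k*U_i* is positive definite. If there is a real constant α such that φ_k*W^{-1/2}φ_k = α·I_{c_k} for every k, then the least-squares measurement—the POVM with operators Σ_{ik} = U_i(μ_kμ_k*)U_i* where μ_k = W^{-1/2}φ_k—minimizes the probability of a detection error: for every POVM {Π_{ik}}, Σ_{i,k} (1/(lr)) tr(ρ_{ik}Π_{ik}) ≤ Σ_{i,k} (1/(lr)) tr(ρ_{ik}Σ_{ik}). -/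

import Mathlib

open Matrix
open scoped ComplexOrder

/-- The positive semidefinite square root of a positive semidefinite matrix, as defined in
the older Mathlib (removed since). -/
noncomputable def Matrix.PosSemidef.sqrt {n 𝕜 : Type*} [Fintype n] [RCLike 𝕜] [DecidableEq n]
    {A : Matrix n n 𝕜} (hA : A.PosSemidef) : Matrix n n 𝕜 :=
  hA.1.eigenvectorUnitary.1 * diagonal ((↑) ∘ (√·) ∘ hA.1.eigenvalues) *
  (star hA.1.eigenvectorUnitary : Matrix n n 𝕜)

open scoped MatrixOrder in
lemma Matrix.PosSemidef.sqrt_eq_cfcSqrt {m : Type*} [Fintype m] [DecidableEq m]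
    {A : Matrix m m ℂ} (hA : A.PosSemidef) : hA.sqrt = CFC.sqrt A := by
  rw [CFC.sqrt_eq_real_sqrt A hA.nonneg, cfcₙ_eq_cfc, hA.1.cfc_eq]
  rfl

open scoped MatrixOrder in
lemma Matrix.PosSemidef.posSemidef_sqrt {m : Type*} [Fintype m] [DecidableEq m]
    {A : Matrix m m ℂ} (hA : A.PosSemidef) : hA.sqrt.PosSemidef := by
  rw [hA.sqrt_eq_cfcSqrt]
  exact (CFC.sqrt_nonneg A).posSemidef

open scoped MatrixOrder in
lemma Matrix.PosSemidef.sqrt_mul_self {m : Type*} [Fintype m] [DecidableEq m]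
    {A : Matrix m m ℂ} (hA : A.PosSemidef) : hA.sqrt * hA.sqrt = A := by
  rw [hA.sqrt_eq_cfcSqrt]
  exact CFC.sqrt_mul_sqrt_self A hA.nonneg

open scoped MatrixOrder in
lemma Matrix.PosSemidef.eq_sqrt_of_sq_eq {m : Type*} [Fintype m] [DecidableEq m]
    {B : Matrix m m ℂ} (hB : B.PosSemidef) {A : Matrix m m ℂ} (hA : A.PosSemidef)
    (h : B ^ 2 = A) : B = hA.sqrt := by
  rw [hA.sqrt_eq_cfcSqrt]
  exact (CFC.sqrt_unique (by rw [← pow_two, h]) hB.nonneg).symm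

open scoped MatrixOrder in
lemma trace_re_nonneg_of_psd {m : Type*} [Fintype m] [DecidableEq m]
    (A B : Matrix m m ℂ) (hA : A.PosSemidef) (hB : B.PosSemidef) :
    0 ≤ ((A * B).trace).re := by
  obtain ⟨C, hC⟩ := CStarAlgebra.nonneg_iff_eq_star_mul_self.mp hB.nonneg
  rw [Matrix.star_eq_conjTranspose] at hC
  have h1 : (A * B).trace = (C * A * Cᴴ).trace := by
    rw [hC, ← Matrix.mul_assoc, trace_mul_cycle]
  have hM : (C * A * Cᴴ).PosSemidef := hA.mul_mul_conjTranspose_same C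
  rw [h1, Matrix.trace, Complex.re_sum]
  refine Finset.sum_nonneg fun i _ => ?_
  have := hM.re_dotProduct_nonneg (Pi.single i 1)
  simpa [dotProduct, mulVec, Pi.single_apply, Finset.mul_sum, Matrix.diag] using this

lemma sqrt_posDef {m : Type*} [Fintype m] [DecidableEq m]
    {W : Matrix m m ℂ} (hW : W.PosDef) : (hW.posSemidef.sqrt).PosDef := by
  set S := hW.posSemidef.sqrt with hSdef
  have hS : S.PosSemidef := hW.posSemidef.posSemidef_sqrt
  refine posDef_iff_dotProduct_mulVec.mpr ⟨hS.1, fun x hx => ?_⟩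
  rcases lt_or_eq_of_le (hS.dotProduct_mulVec_nonneg x) with h | h
  · exact h
  · exfalso
    have hzero : S *ᵥ x = 0 := (hS.dotProduct_mulVec_zero_iff x).mp h.symm
    have : W *ᵥ x = 0 := by
      rw [← hW.posSemidef.sqrt_mul_self, ← mulVec_mulVec, hzero, mulVec_zero]
    have h2 := hW.dotProduct_mulVec_pos hx
    rw [this, dotProduct_zero] at h2
    exact lt_irrefl _ h2

lemma eq_zero_of_conj_posDef {m k : Type*} [Fintype m] [DecidableEq m] [Fintype k] [DecidableEq k]
    {T : Matrix m m ℂ} (hT : T.PosDef) (φ : Matrix m k ℂ) (h : φᴴ * T * φ = 0) : φ = 0 := by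
  ext a j
  have hcol : φ *ᵥ Pi.single j 1 = 0 := by
    by_contra hne
    have hpos := hT.dotProduct_mulVec_pos hne
    have heq : star (Pi.single j (1:ℂ)) ⬝ᵥ (φᴴ * T * φ) *ᵥ Pi.single j 1
        = star (φ *ᵥ Pi.single j 1) ⬝ᵥ T *ᵥ (φ *ᵥ Pi.single j 1) := by
      simp only [star_mulVec, dotProduct_mulVec, vecMul_vecMul]
    rw [h] at heq
    simp only [Matrix.zero_mulVec, dotProduct_zero] at heq
    rw [← heq] at hpos
    exact lt_irrefl _ hpos
  have := congrFun hcol a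
  simpa [mulVec, dotProduct, Pi.single_apply] using this

set_option maxHeartbeats 1600000 in
/-- Theorem 3, part 3: for a compound geometrically uniform state set
`ρ_{ik} = U_i φ_k φ_k* U_i*` of density matrices with uniform priors `1/(lr)` and
`W = ∑_{i,k} U_i φ_k φ_k* U_i*` positive definite, if `φ_k* W^{-1/2} φ_k = α I` for every
`k` and some real constant `α`, then the least-squares measurement, the POVM with
operators `Σ_{ik} = U_i (μ_k μ_k*) U_i*` where `μ_k = W^{-1/2} φ_k`, minimizes the
probability of a detection error. -/
theorem cgu_lsm_optimal (n l r : ℕ) [NeZero l] (c : Fin r → ℕ)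
    (U : Fin l → Matrix (Fin n) (Fin n) ℂ)
    (hUunit : ∀ i, U i ∈ Matrix.unitaryGroup (Fin n) ℂ)
    (hUinj : Function.Injective U)
    (hUone : U 0 = 1)
    (hUmul : ∀ i j, ∃ t, U i * U j = U t)
    (hUinv : ∀ i, ∃ j, (U i)ᴴ = U j)
    (φ : (k : Fin r) → Matrix (Fin n) (Fin (c k)) ℂ)
    (hφtr : ∀ k, (φ k * (φ k)ᴴ).trace = 1)
    (ρ : Fin l → Fin r → Matrix (Fin n) (Fin n) ℂ)
    (hρdef : ∀ i k, ρ i k = U i * (φ k * (φ k)ᴴ) * (U i)ᴴ)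
    (W : Matrix (Fin n) (Fin n) ℂ)
    (hWdef : W = ∑ i, ∑ k, U i * (φ k * (φ k)ᴴ) * (U i)ᴴ) (hW : W.PosDef)
    (μ : (k : Fin r) → Matrix (Fin n) (Fin (c k)) ℂ)
    (hμ : ∀ k, μ k = (hW.posSemidef.sqrt)⁻¹ * φ k)
    (α : ℝ)
    (hα : ∀ k, (φ k)ᴴ * (hW.posSemidef.sqrt)⁻¹ * φ k = (α : ℂ) • 1) :
    ∀ Pm : Fin l → Fin r → Matrix (Fin n) (Fin n) ℂ,
      (∀ i k, (Pm i k).PosSemidef) → (∑ i, ∑ k, Pm i k = 1) →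
      ∑ i, ∑ k, (1 / ((l : ℝ) * (r : ℝ))) * ((ρ i k * Pm i k).trace).re ≤
        ∑ i, ∑ k, (1 / ((l : ℝ) * (r : ℝ))) *
          ((ρ i k * (U i * (μ k * (μ k)ᴴ) * (U i)ᴴ)).trace).re := by
  intro Pm hPSD hPsum
  rcases Nat.eq_zero_or_pos r with hr | hr
  · subst hr
    simp
  -- Notation
  set S := hW.posSemidef.sqrt with hSdef
  have hSpsd : S.PosSemidef := hW.posSemidef.posSemidef_sqrt
  have hSpd : S.PosDef := sqrt_posDef hW
  have hSS : S * S = W := hW.posSemidef.sqrt_mul_self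
  set T := S⁻¹ with hTdef
  have hTpd : T.PosDef := hSpd.inv
  have hSdet : IsUnit S.det := isUnit_iff_ne_zero.mpr hSpd.det_pos.ne'
  have hST : S * T = 1 := mul_nonsing_inv _ hSdet
  have hTS : T * S = 1 := nonsing_inv_mul _ hSdet
  have hTH : Tᴴ = T := hTpd.1
  -- unitary facts
  have hUU : ∀ i, U i * (U i)ᴴ = 1 := by
    intro i
    have := (hUunit i).2
    rwa [Matrix.star_eq_conjTranspose] at this
  have hUU' : ∀ i, (U i)ᴴ * U i = 1 := by
    intro i
    have := (hUunit i).1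
    rwa [Matrix.star_eq_conjTranspose] at this
  -- W is G-invariant
  have hWinv : ∀ i, U i * W * (U i)ᴴ = W := by
    intro i
    choose f hf using hUmul i
    have hfinj : Function.Injective f := by
      intro a b hab
      apply hUinj
      have h1 : U i * U a = U i * U b := by rw [hf a, hf b, hab]
      calc U a = ((U i)ᴴ * U i) * U a := by rw [hUU' i, one_mul]
        _ = (U i)ᴴ * (U i * U a) := by rw [Matrix.mul_assoc]
        _ = (U i)ᴴ * (U i * U b) := by rw [h1]
        _ = ((U i)ᴴ * U i) * U b := by rw [Matrix.mul_assoc]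
        _ = U b := by rw [hUU' i, one_mul]
    have hfbij : Function.Bijective f := Finite.injective_iff_bijective.mp hfinj
    calc U i * W * (U i)ᴴ
        = ∑ j, ∑ k, (U i * U j) * (φ k * (φ k)ᴴ) * (U i * U j)ᴴ := by
          rw [hWdef]
          simp only [Finset.mul_sum, Finset.sum_mul, conjTranspose_mul, Matrix.mul_assoc]
      _ = ∑ j, ∑ k, U (f j) * (φ k * (φ k)ᴴ) * (U (f j))ᴴ := by
          refine Finset.sum_congr rfl fun j _ => Finset.sum_congr rfl fun k _ => ?_
          rw [hf j]
      _ = W := by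
          rw [hWdef]
          exact Fintype.sum_bijective f hfbij _ _ (fun j => rfl)
  -- S is G-invariant, commutes with each U i
  have hSinv : ∀ i, U i * S * (U i)ᴴ = S := by
    intro i
    have hpsd : (U i * S * (U i)ᴴ).PosSemidef := hSpsd.mul_mul_conjTranspose_same (U i)
    have hsq : (U i * S * (U i)ᴴ) ^ 2 = W := by
      rw [pow_two]
      calc (U i * S * (U i)ᴴ) * (U i * S * (U i)ᴴ)
          = U i * S * ((U i)ᴴ * U i) * S * (U i)ᴴ := by
            simp only [Matrix.mul_assoc]
        _ = U i * (S * S) * (U i)ᴴ := by rw [hUU' i]; simp only [Matrix.mul_assoc, Matrix.one_mul]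
        _ = W := by rw [hSS, hWinv i]
    exact hpsd.eq_sqrt_of_sq_eq hW.posSemidef hsq
  have hUS : ∀ i, U i * S = S * U i := by
    intro i
    calc U i * S = U i * S * ((U i)ᴴ * U i) := by rw [hUU' i, Matrix.mul_one]
      _ = (U i * S * (U i)ᴴ) * U i := by simp only [Matrix.mul_assoc]
      _ = S * U i := by rw [hSinv i]
  have hUHS : ∀ i, (U i)ᴴ * S = S * (U i)ᴴ := by
    intro i
    have := congrArg conjTranspose (hUS i)
    simpa only [conjTranspose_mul, hSpd.1.eq] using this.symm
  have hTU : ∀ i, T * (U i)ᴴ = (U i)ᴴ * T := by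
    intro i
    calc T * (U i)ᴴ = T * (U i)ᴴ * (S * T) := by rw [hST, Matrix.mul_one]
      _ = T * ((U i)ᴴ * S) * T := by simp only [Matrix.mul_assoc]
      _ = T * (S * (U i)ᴴ) * T := by rw [hUHS i]
      _ = (T * S) * ((U i)ᴴ * T) := by simp only [Matrix.mul_assoc]
      _ = (U i)ᴴ * T := by rw [hTS, Matrix.one_mul]
  -- α is positive
  have k0 : Fin r := ⟨0, hr⟩
  have hαnn : 0 ≤ α := by
    have hck : c k0 ≠ 0 := by
      intro h
      have hemp : IsEmpty (Fin (c k0)) := by rw [h]; infer_instance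
      have h0 : φ k0 * (φ k0)ᴴ = 0 := by
        ext a b
        simp [Matrix.mul_apply, Finset.univ_eq_empty]
      have := hφtr k0
      rw [h0] at this
      simp at this
    obtain ⟨j⟩ : Nonempty (Fin (c k0)) := ⟨⟨0, Nat.pos_of_ne_zero hck⟩⟩
    have hpsd : ((φ k0)ᴴ * T * φ k0).PosSemidef := hTpd.posSemidef.conjTranspose_mul_mul_same (φ k0)
    rw [hα k0] at hpsd
    have := hpsd.re_dotProduct_nonneg (Pi.single j 1)
    simpa [dotProduct, mulVec, Pi.single_apply, Matrix.one_apply] using this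
  have hαne : α ≠ 0 := by
    intro h0
    have hz : (φ k0)ᴴ * T * φ k0 = 0 := by rw [hα k0, h0]; simp
    have := eq_zero_of_conj_posDef hTpd (φ k0) hz
    have htr := hφtr k0
    rw [this] at htr
    simp at htr
  have hαpos : 0 < α := lt_of_le_of_ne hαnn (Ne.symm hαne)
  -- the key matrix A = α • S
  set A := (α : ℂ) • S with hAdef
  have hApd : A.PosDef := by
    refine posDef_iff_dotProduct_mulVec.mpr ⟨?_, ?_⟩
    · rw [hAdef]
      rw [IsHermitian, conjTranspose_smul, hSpd.1.eq]
      simp [Complex.star_def, Complex.conj_ofReal]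
    · intro x hx
      have h1 := hSpd.dotProduct_mulVec_pos hx
      rw [hAdef, Matrix.smul_mulVec, dotProduct_smul]
      exact smul_pos (by exact_mod_cast hαpos) h1
  have hAdet : IsUnit A.det := isUnit_iff_ne_zero.mpr hApd.det_pos.ne'
  haveI : Invertible A := A.invertibleOfIsUnitDet hAdet
  have hAinv : A⁻¹ = (α : ℂ)⁻¹ • T := by
    apply inv_eq_right_inv
    rw [hAdef, Matrix.smul_mul, Matrix.mul_smul, smul_smul, hST]
    rw [mul_inv_cancel₀ (by exact_mod_cast hαne)]
    simp
  -- key positivity : A - φ k (φ k)ᴴ is PSD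
  have hkey : ∀ k, (A - φ k * (φ k)ᴴ).PosSemidef := by
    intro k
    have hschur1 : ((1 : Matrix (Fin (c k)) (Fin (c k)) ℂ) - (φ k)ᴴ * A⁻¹ * φ k).PosSemidef := by
      have : (φ k)ᴴ * A⁻¹ * φ k = 1 := by
        rw [hAinv, Matrix.mul_smul, Matrix.smul_mul, hα k, smul_smul]
        rw [inv_mul_cancel₀ (by exact_mod_cast hαne)]
        simp
      rw [this, sub_self]
      exact Matrix.PosSemidef.zero
    haveI : Invertible (1 : Matrix (Fin (c k)) (Fin (c k)) ℂ) := invertibleOne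
    have hblock := (Matrix.PosDef.fromBlocks₁₁ (φ k) 1 hApd).mpr hschur1
    have h2 := (Matrix.PosDef.fromBlocks₂₂ A (φ k) Matrix.PosDef.one).mp hblock
    rwa [inv_one, Matrix.mul_one] at h2
  have hkey2 : ∀ i k, (A - ρ i k).PosSemidef := by
    intro i k
    have h1 : (U i * (A - φ k * (φ k)ᴴ) * (U i)ᴴ).PosSemidef :=
      (hkey k).mul_mul_conjTranspose_same (U i)
    have h2 : U i * (A - φ k * (φ k)ᴴ) * (U i)ᴴ = A - ρ i k := by
      rw [Matrix.mul_sub, Matrix.sub_mul, hρdef i k]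
      congr 1
      rw [hAdef, Matrix.mul_smul, Matrix.smul_mul, hSinv i]
    rwa [h2] at h1
  -- termwise bound for the POVM
  have hbound : ∀ i k, ((ρ i k * Pm i k).trace).re ≤ ((A * Pm i k).trace).re := by
    intro i k
    have h1 := trace_re_nonneg_of_psd _ _ (hkey2 i k) (hPSD i k)
    have h2 : (A - ρ i k) * Pm i k = A * Pm i k - ρ i k * Pm i k := by
      rw [Matrix.sub_mul]
    rw [h2, trace_sub, Complex.sub_re] at h1
    linarith
  -- sum of A * Pm traces
  have hsumA : ∑ i, ∑ k, ((A * Pm i k).trace).re = ((A : Matrix (Fin n) (Fin n) ℂ).trace).re := by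
    have : ∑ i, ∑ k, (A * Pm i k).trace = A.trace := by
      calc ∑ i, ∑ k, (A * Pm i k).trace = (∑ i, ∑ k, A * Pm i k).trace := by
            rw [trace_sum]
            exact Finset.sum_congr rfl fun i _ => (trace_sum _ _).symm
        _ = (A * ∑ i, ∑ k, Pm i k).trace := by
            simp only [Finset.mul_sum]
        _ = A.trace := by rw [hPsum, Matrix.mul_one]
    calc ∑ i, ∑ k, ((A * Pm i k).trace).re = (∑ i, ∑ k, (A * Pm i k).trace).re := by
          rw [Complex.re_sum]
          exact Finset.sum_congr rfl fun i _ => (Complex.re_sum _ _).symm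
      _ = (A.trace).re := by rw [this]
  -- evaluation of the LSM success sum
  have hLSM : ∀ i k, (ρ i k * (U i * (μ k * (μ k)ᴴ) * (U i)ᴴ)).trace = (α:ℂ) * (ρ i k * T).trace := by
    intro i k
    have hμk : μ k = T * φ k := by rw [hμ k]
    have hμH : (μ k)ᴴ = (φ k)ᴴ * T := by rw [hμk, conjTranspose_mul, hTH]
    have hmid : (φ k * (φ k)ᴴ) * (μ k * (μ k)ᴴ) = (α:ℂ) • ((φ k * (φ k)ᴴ) * T) := by
      calc (φ k * (φ k)ᴴ) * (μ k * (μ k)ᴴ)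
          = φ k * (((φ k)ᴴ * T) * φ k) * ((φ k)ᴴ * T) := by
            rw [hμH, hμk]; simp only [Matrix.mul_assoc]
        _ = φ k * ((α:ℂ) • (1 : Matrix (Fin (c k)) (Fin (c k)) ℂ)) * ((φ k)ᴴ * T) := by
            rw [hα k]
        _ = (α:ℂ) • ((φ k * (φ k)ᴴ) * T) := by
            rw [Matrix.mul_smul, Matrix.mul_one, Matrix.smul_mul]
            simp only [Matrix.mul_assoc]
    calc (ρ i k * (U i * (μ k * (μ k)ᴴ) * (U i)ᴴ)).trace
        = (U i * ((φ k * (φ k)ᴴ) * (μ k * (μ k)ᴴ)) * (U i)ᴴ).trace := by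
          rw [hρdef i k]
          congr 1
          calc U i * (φ k * (φ k)ᴴ) * (U i)ᴴ * (U i * (μ k * (μ k)ᴴ) * (U i)ᴴ)
              = U i * (φ k * (φ k)ᴴ) * ((U i)ᴴ * U i) * (μ k * (μ k)ᴴ) * (U i)ᴴ := by
                simp only [Matrix.mul_assoc]
            _ = U i * ((φ k * (φ k)ᴴ) * (μ k * (μ k)ᴴ)) * (U i)ᴴ := by
                rw [hUU' i]; simp only [Matrix.mul_assoc, Matrix.one_mul]
      _ = (α:ℂ) * (U i * ((φ k * (φ k)ᴴ) * T) * (U i)ᴴ).trace := by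
          rw [hmid, Matrix.mul_smul, Matrix.smul_mul, trace_smul, smul_eq_mul]
      _ = (α:ℂ) * (ρ i k * T).trace := by
          congr 1
          rw [hρdef i k]
          congr 1
          calc U i * ((φ k * (φ k)ᴴ) * T) * (U i)ᴴ
              = U i * (φ k * (φ k)ᴴ) * (T * (U i)ᴴ) := by simp only [Matrix.mul_assoc]
            _ = U i * (φ k * (φ k)ᴴ) * ((U i)ᴴ * T) := by rw [hTU i]
            _ = U i * (φ k * (φ k)ᴴ) * (U i)ᴴ * T := by simp only [Matrix.mul_assoc]
  have hsumρ : ∑ i, ∑ k, ρ i k = W := by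
    rw [hWdef]
    exact Finset.sum_congr rfl fun i _ => Finset.sum_congr rfl fun k _ => hρdef i k
  have hRHS : ∑ i, ∑ k, ((ρ i k * (U i * (μ k * (μ k)ᴴ) * (U i)ᴴ)).trace).re
      = ((A : Matrix (Fin n) (Fin n) ℂ).trace).re := by
    have h1 : ∑ i, ∑ k, (ρ i k * (U i * (μ k * (μ k)ᴴ) * (U i)ᴴ)).trace = A.trace := by
      calc ∑ i, ∑ k, (ρ i k * (U i * (μ k * (μ k)ᴴ) * (U i)ᴴ)).trace
          = ∑ i, ∑ k, (α:ℂ) * (ρ i k * T).trace := by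
            exact Finset.sum_congr rfl fun i _ => Finset.sum_congr rfl fun k _ => hLSM i k
        _ = (α:ℂ) * ((∑ i, ∑ k, ρ i k) * T).trace := by
            rw [Finset.sum_mul, trace_sum, Finset.mul_sum]
            refine Finset.sum_congr rfl fun i _ => ?_
            rw [Finset.sum_mul, trace_sum, Finset.mul_sum]
        _ = (α:ℂ) * (W * T).trace := by rw [hsumρ]
        _ = A.trace := by
            rw [← hSS, Matrix.mul_assoc, hST, Matrix.mul_one, hAdef, trace_smul, smul_eq_mul]
    calc ∑ i, ∑ k, ((ρ i k * (U i * (μ k * (μ k)ᴴ) * (U i)ᴴ)).trace).re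
        = (∑ i, ∑ k, (ρ i k * (U i * (μ k * (μ k)ᴴ) * (U i)ᴴ)).trace).re := by
          rw [Complex.re_sum]
          exact Finset.sum_congr rfl fun i _ => (Complex.re_sum _ _).symm
      _ = (A.trace).re := by rw [h1]
  -- put it all together
  have hmain : ∑ i, ∑ k, ((ρ i k * Pm i k).trace).re
      ≤ ∑ i, ∑ k, ((ρ i k * (U i * (μ k * (μ k)ᴴ) * (U i)ᴴ)).trace).re := by
    rw [hRHS, ← hsumA]
    exact Finset.sum_le_sum fun i _ => Finset.sum_le_sum fun k _ => hbound i k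
  have hconst : (0:ℝ) ≤ 1 / ((l : ℝ) * (r : ℝ)) := by positivity
  calc ∑ i, ∑ k, (1 / ((l : ℝ) * (r : ℝ))) * ((ρ i k * Pm i k).trace).re
      = (1 / ((l : ℝ) * (r : ℝ))) * ∑ i, ∑ k, ((ρ i k * Pm i k).trace).re := by
        rw [Finset.mul_sum]
        exact Finset.sum_congr rfl fun i _ => (Finset.mul_sum _ _ _).symm
    _ ≤ (1 / ((l : ℝ) * (r : ℝ))) * ∑ i, ∑ k, ((ρ i k * (U i * (μ k * (μ k)ᴴ) * (U i)ᴴ)).trace).re :=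
        mul_le_mul_of_nonneg_left hmain hconst
    _ = ∑ i, ∑ k, (1 / ((l : ℝ) * (r : ℝ))) * ((ρ i k * (U i * (μ k * (μ k)ᴴ) * (U i)ᴴ)).trace).re := by
        rw [Finset.mul_sum]
        exact Finset.sum_congr rfl fun i _ => Finset.mul_sum _ _ _
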